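/- arXiv:2503.02207 — 4 statements merged into one kernel-verified Lean document; each statement's English description precedes it below -/
import Mathlib

section
/- Let d ∈ ℕ, ε ∈ (0,1), and let L be an invertible affine map on ℝ^d. Let K̃ ⊆ K be convex bodies in ℝ^d. Then K̃ is an ε-kernel of K if and only if L(K̃) is an ε-kernel of L(K). -/
open Metric Set
open scoped RealInnerProductSpace

noncomputable section

/-- The width of a set `K` in direction `u`: `max_{x ∈ K} ⟪u,x⟫ - min_{x ∈ K} ⟪u,x⟫`. -/
def dirWidth {d : ℕ} (u : EuclideanSpace ℝ (Fin d)) (K : Set (EuclideanSpace ℝ (Fin d))) : ℝ :=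
  sSup ((fun x => ⟪u, x⟫) '' K) - sInf ((fun x => ⟪u, x⟫) '' K)

/-- `Kt` is an `ε`-kernel of `K`: `Kt ⊆ K` and for every unit direction `u`,
the width of `Kt` in direction `u` is at least `(1-ε)` times the width of `K`. -/
def IsEpsKernel {d : ℕ} (ε : ℝ) (Kt K : Set (EuclideanSpace ℝ (Fin d))) : Prop :=
  Kt ⊆ K ∧ ∀ u : EuclideanSpace ℝ (Fin d), ‖u‖ = 1 →
    (1 - ε) * dirWidth u K ≤ dirWidth u Kt

namespace EpsKernelAux

variable {d : ℕ}

local notation "E" => EuclideanSpace ℝ (Fin d)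

lemma inner_affine (L : E ≃ᵃ[ℝ] E) (u x : E) :
    ⟪u, L x⟫ = ⟪LinearMap.adjoint (L.linear : E →ₗ[ℝ] E) u, x⟫ + ⟪u, L 0⟫ := by
  have h : L x = L.linear x + L 0 := by
    have := L.map_vadd 0 x
    simpa [vadd_eq_add] using this
  rw [h, inner_add_right, LinearMap.adjoint_inner_left]
  rfl

lemma adjoint_ne_zero (L : E ≃ᵃ[ℝ] E) (u : E) (hu : u ≠ 0) :
    LinearMap.adjoint (L.linear : E →ₗ[ℝ] E) u ≠ 0 := by
  intro h0
  apply hu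
  have h2 : ⟪u, (L.linear : E →ₗ[ℝ] E) (L.linear.symm u)⟫ = 0 := by
    rw [← LinearMap.adjoint_inner_left, h0, inner_zero_left]
  simp only [LinearEquiv.coe_coe, LinearEquiv.apply_symm_apply] at h2
  exact inner_self_eq_zero.mp h2

lemma dirWidth_image (L : E ≃ᵃ[ℝ] E) (u : E)
    (hw : LinearMap.adjoint (L.linear : E →ₗ[ℝ] E) u ≠ 0)
    {K : Set E} (hK : K.Nonempty) (hcp : IsCompact K) :
    dirWidth u (L '' K) =
      ‖LinearMap.adjoint (L.linear : E →ₗ[ℝ] E) u‖ *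
        dirWidth (‖LinearMap.adjoint (L.linear : E →ₗ[ℝ] E) u‖⁻¹ •
          LinearMap.adjoint (L.linear : E →ₗ[ℝ] E) u) K := by
  set w := LinearMap.adjoint (L.linear : E →ₗ[ℝ] E) u with hwdef
  have hwn : (0:ℝ) < ‖w‖ := norm_pos_iff.mpr hw
  set v := ‖w‖⁻¹ • w with hvdef
  have hvw : w = ‖w‖ • v := by
    rw [hvdef, smul_smul, mul_inv_cancel₀ hwn.ne', one_smul]
  set c := ⟪u, L 0⟫ with hcdef
  set A := (fun x => ⟪v, x⟫) '' K with hAdef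
  have himg : (fun x => ⟪u, x⟫) '' (L '' K) = (fun t => ‖w‖ * t + c) '' A := by
    rw [hAdef, image_image, image_image]
    apply image_congr
    intro x _
    rw [inner_affine L u x, ← hwdef, ← hcdef]
    conv_lhs => rw [hvw]
    rw [real_inner_smul_left]
  have hAne : A.Nonempty := hK.image _
  have hAcp : IsCompact A := hcp.image (continuous_const.inner continuous_id)
  have hmono : Monotone (fun t : ℝ => ‖w‖ * t + c) := fun a b h => by
    simp only []; nlinarith [mul_le_mul_of_nonneg_left h hwn.le]
  have hsup : sSup ((fun t => ‖w‖ * t + c) '' A) = ‖w‖ * sSup A + c :=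
    (hmono.map_csSup_of_continuousAt (by fun_prop) hAne hAcp.bddAbove).symm
  have hinf : sInf ((fun t => ‖w‖ * t + c) '' A) = ‖w‖ * sInf A + c :=
    (hmono.map_csInf_of_continuousAt (by fun_prop) hAne hAcp.bddBelow).symm
  unfold dirWidth
  rw [himg, hsup, hinf, ← hAdef]
  ring

lemma forward (ε : ℝ) (L : E ≃ᵃ[ℝ] E) {Kt K : Set E}
    (hKtne : Kt.Nonempty) (hKne : K.Nonempty)
    (hKtcp : IsCompact Kt) (hKcp : IsCompact K)
    (h : IsEpsKernel ε Kt K) : IsEpsKernel ε (L '' Kt) (L '' K) := by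
  obtain ⟨hsub, h⟩ := h
  refine ⟨image_mono hsub, ?_⟩
  intro u hu
  have hu0 : u ≠ 0 := by
    intro h0; rw [h0, norm_zero] at hu; exact one_ne_zero hu.symm
  set w := LinearMap.adjoint (L.linear : E →ₗ[ℝ] E) u with hwdef
  have hw : w ≠ 0 := adjoint_ne_zero L u hu0
  have hwn : (0:ℝ) < ‖w‖ := norm_pos_iff.mpr hw
  have hvnorm : ‖(‖w‖⁻¹ • w : E)‖ = 1 := by
    rw [norm_smul, norm_inv, norm_norm, inv_mul_cancel₀ hwn.ne']
  rw [dirWidth_image L u hw hKne hKcp, dirWidth_image L u hw hKtne hKtcp]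
  have hkey := h _ hvnorm
  calc (1 - ε) * (‖w‖ * dirWidth (‖w‖⁻¹ • w) K)
      = ‖w‖ * ((1 - ε) * dirWidth (‖w‖⁻¹ • w) K) := by ring
    _ ≤ ‖w‖ * dirWidth (‖w‖⁻¹ • w) Kt := mul_le_mul_of_nonneg_left hkey hwn.le

end EpsKernelAux

/-- Being an `ε`-kernel is invariant under invertible affine maps. -/
theorem epsKernel_affine_invariant (d : ℕ) (ε : ℝ) (hε : ε ∈ Set.Ioo (0 : ℝ) 1)
    (L : EuclideanSpace ℝ (Fin d) ≃ᵃ[ℝ] EuclideanSpace ℝ (Fin d))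
    (Kt K : Set (EuclideanSpace ℝ (Fin d)))
    (hsub : Kt ⊆ K)
    (hKtne : Kt.Nonempty) (hKne : K.Nonempty)
    (hKtcp : IsCompact Kt) (hKcp : IsCompact K)
    (hKtcv : Convex ℝ Kt) (hKcv : Convex ℝ K) :
    IsEpsKernel ε Kt K ↔ IsEpsKernel ε (L '' Kt) (L '' K) := by
  constructor
  · exact EpsKernelAux.forward ε L hKtne hKne hKtcp hKcp
  · intro h
    have hLc : Continuous L := L.toAffineMap.continuous_of_finiteDimensional
    have h' := EpsKernelAux.forward ε L.symm (hKtne.image L) (hKne.image L)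
      (hKtcp.image hLc) (hKcp.image hLc) h
    have e1 : L.symm '' (L '' Kt) = Kt := by
      rw [image_image]; simp
    have e2 : L.symm '' (L '' K) = K := by
      rw [image_image]; simp
    rwa [e1, e2] at h'
end
end

section
/- Let d ∈ ℕ, ε > 0, and let K̃ ⊆ K ⊆ ℝ^d be nonempty compact convex sets such that the unit ball B_d is contained in K. If the Hausdorff distance between K̃ and K is at most ε, then K̃ is an ε-kernel of K. -/
open Metric Set
open scoped RealInnerProductSpace

noncomputable section

/-- If `B_d ⊆ K` and `Kt ⊆ K` is an `ε`-precise Hausdorff approximation of `K`,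
then `Kt` is an `ε`-kernel of `K`. -/
theorem epsKernel_of_hausdorffDist_le (d : ℕ) (ε : ℝ) (hε : 0 < ε)
    (Kt K : Set (EuclideanSpace ℝ (Fin d)))
    (hsub : Kt ⊆ K)
    (hKtne : Kt.Nonempty) (hKne : K.Nonempty)
    (hKtcp : IsCompact Kt) (hKcp : IsCompact K)
    (hKtcv : Convex ℝ Kt) (hKcv : Convex ℝ K)
    (hball : closedBall (0 : EuclideanSpace ℝ (Fin d)) 1 ⊆ K)
    (hH : hausdorffDist Kt K ≤ ε) :
    IsEpsKernel ε Kt K := by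
  refine ⟨hsub, fun u hu => ?_⟩
  set f : EuclideanSpace ℝ (Fin d) → ℝ := fun x => ⟪u, x⟫ with hf
  have hfc : Continuous f := continuous_const.inner continuous_id
  have hKtim : IsCompact (f '' Kt) := hKtcp.image hfc
  have hKim : IsCompact (f '' K) := hKcp.image hfc
  have hbAt : BddAbove (f '' Kt) := hKtim.bddAbove
  have hbBt : BddBelow (f '' Kt) := hKtim.bddBelow
  have hbA : BddAbove (f '' K) := hKim.bddAbove
  have hbB : BddBelow (f '' K) := hKim.bddBelow
  have hed : EMetric.hausdorffEdist K Kt ≠ ⊤ :=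
    hausdorffEdist_ne_top_of_nonempty_of_bounded hKne hKtne hKcp.isBounded hKtcp.isBounded
  have key : ∀ x ∈ K, ∃ y ∈ Kt, dist x y ≤ ε := by
    intro x hx
    obtain ⟨y, hy, hdy⟩ := hKtcp.exists_infDist_eq_dist hKtne x
    refine ⟨y, hy, ?_⟩
    rw [← hdy]
    calc infDist x Kt ≤ hausdorffDist K Kt := infDist_le_hausdorffDist_of_mem hx hed
      _ = hausdorffDist Kt K := hausdorffDist_comm
      _ ≤ ε := hH
  have hfdiff : ∀ x y : EuclideanSpace ℝ (Fin d), |f x - f y| ≤ dist x y := by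
    intro x y
    have h1 : f x - f y = ⟪u, x - y⟫ := by simp [hf, inner_sub_right]
    rw [h1]
    calc |⟪u, x - y⟫| ≤ ‖u‖ * ‖x - y‖ := abs_real_inner_le_norm u (x - y)
      _ = dist x y := by rw [hu, one_mul, dist_eq_norm]
  have hsup : sSup (f '' K) ≤ sSup (f '' Kt) + ε := by
    apply csSup_le (hKne.image f)
    rintro _ ⟨x, hx, rfl⟩
    obtain ⟨y, hy, hd⟩ := key x hx
    have h1 : f x - f y ≤ ε := le_trans (le_trans (le_abs_self _) (hfdiff x y)) hd
    have h2 : f y ≤ sSup (f '' Kt) := le_csSup hbAt ⟨y, hy, rfl⟩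
    linarith
  have hinf : sInf (f '' Kt) - ε ≤ sInf (f '' K) := by
    apply le_csInf (hKne.image f)
    rintro _ ⟨x, hx, rfl⟩
    obtain ⟨y, hy, hd⟩ := key x hx
    have h1 : f y - f x ≤ ε := le_trans (le_trans (le_abs_self _) (by rw [abs_sub_comm]; exact hfdiff x y)) hd
    have h2 : sInf (f '' Kt) ≤ f y := csInf_le hbBt ⟨y, hy, rfl⟩
    linarith
  have hu1 : u ∈ K := hball (by simp [hu])
  have hu2 : -u ∈ K := hball (by simp [hu])
  have hfu : f u = 1 := by
    show (⟪u, u⟫ : ℝ) = 1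
    rw [real_inner_self_eq_norm_sq, hu]; norm_num
  have hfu' : f (-u) = -1 := by
    show (⟪u, -u⟫ : ℝ) = -1
    rw [inner_neg_right, real_inner_self_eq_norm_sq, hu]; norm_num
  have hS : (1 : ℝ) ≤ sSup (f '' K) := hfu ▸ le_csSup hbA ⟨u, hu1, rfl⟩
  have hI : sInf (f '' K) ≤ -1 := hfu' ▸ csInf_le hbB ⟨-u, hu2, rfl⟩
  have hIle : sInf (f '' Kt) ≤ sSup (f '' Kt) := by
    obtain ⟨y, hy⟩ := hKtne
    exact le_trans (csInf_le hbBt ⟨y, hy, rfl⟩) (le_csSup hbAt ⟨y, hy, rfl⟩)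
  unfold dirWidth
  nlinarith [hsup, hinf, hS, hI, hε.le]
end
end

section
/- Let d ∈ ℕ, R ≥ 1, ε > 0, and let K̃ ⊆ K ⊆ ℝ^d be nonempty compact convex sets with K ⊆ R·B_d. If K̃ is an ε-kernel of K, then the Hausdorff distance between K̃ and K is at most 2εR. -/
/-!
Let `x ∈ K` lie outside `Kt`, let `y` be its nearest point in `Kt`, and let `u` be the unit vector
from `y` to `x`. Since `y` is the metric projection of `x` onto the convex set `Kt`, the functional
`⟪u, ·⟫` is maximised on `Kt` at `y`, while it takes the larger value `⟪u, y⟫ + dist x y` at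
`x ∈ K`. Hence the width of `Kt` in direction `u` falls short of that of `K` by at least
`dist x y`, and the kernel property bounds this shortfall by `ε` times a width of `K`, which is at
most `2R`.
-/

open Metric Set
open scoped RealInnerProductSpace

noncomputable section

theorem real_inner_le_of_infDist_eq_dist {E : Type*} [NormedAddCommGroup E]
    [InnerProductSpace ℝ E] {s : Set E} (hs : Convex ℝ s) {x y z : E} (hy : y ∈ s)
    (hxy : infDist x s = dist x y) (hz : z ∈ s) : ⟪x - y, z⟫ ≤ ⟪x - y, y⟫ := by
  have hproj : ‖x - y‖ = ⨅ w : s, ‖x - w‖ := by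
    simp_rw [← dist_eq_norm, ← hxy, infDist_eq_iInf]
  have := (norm_eq_iInf_iff_real_inner_le_zero hs hy).1 hproj z hz
  rw [inner_sub_right] at this
  linarith

section dirWidth

variable {d : ℕ} {Kt K : Set (EuclideanSpace ℝ (Fin d))}

theorem dirWidth_le_two_mul {u : EuclideanSpace ℝ (Fin d)} {R : ℝ} (hu : ‖u‖ ≤ 1)
    (hK : K.Nonempty) (hKR : K ⊆ closedBall 0 R) : dirWidth u K ≤ 2 * R := by
  have habs : ∀ z ∈ K, |⟪u, z⟫| ≤ R := fun z hz =>
    calc |⟪u, z⟫| ≤ ‖u‖ * ‖z‖ := abs_real_inner_le_norm u z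
      _ ≤ 1 * R := mul_le_mul hu (mem_closedBall_zero_iff.1 (hKR hz)) (norm_nonneg z) zero_le_one
      _ = R := one_mul R
  have hsup : sSup ((fun z => ⟪u, z⟫) '' K) ≤ R :=
    csSup_le (hK.image _) (forall_mem_image.2 fun z hz => (abs_le.1 (habs z hz)).2)
  have hinf : -R ≤ sInf ((fun z => ⟪u, z⟫) '' K) :=
    le_csInf (hK.image _) (forall_mem_image.2 fun z hz => (abs_le.1 (habs z hz)).1)
  unfold dirWidth
  linarith

theorem exists_infDist_add_dirWidth_le (hKt : IsCompact Kt) (hKtcv : Convex ℝ Kt)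
    (hKtne : Kt.Nonempty) (hK : IsCompact K) (hsub : Kt ⊆ K) {x : EuclideanSpace ℝ (Fin d)}
    (hx : x ∈ K) (hxKt : x ∉ Kt) :
    ∃ u : EuclideanSpace ℝ (Fin d), ‖u‖ = 1 ∧ infDist x Kt + dirWidth u Kt ≤ dirWidth u K := by
  obtain ⟨y, hy, hxy⟩ := hKt.exists_infDist_eq_dist hKtne x
  have hD : 0 < ‖x - y‖ := by
    rw [← dist_eq_norm, ← hxy]
    exact (hKt.isClosed.notMem_iff_infDist_pos hKtne).1 hxKt
  set u := ‖x - y‖⁻¹ • (x - y)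
  have hu : ‖u‖ = 1 := by
    rw [norm_smul, norm_inv, norm_norm, inv_mul_cancel₀ hD.ne']
  have hcont : Continuous fun z : EuclideanSpace ℝ (Fin d) => ⟪u, z⟫ :=
    continuous_const.inner continuous_id
  have hsupKt : sSup ((fun z => ⟪u, z⟫) '' Kt) ≤ ⟪u, y⟫ := by
    refine csSup_le (hKtne.image _) (forall_mem_image.2 fun z hz => ?_)
    simp only [u, real_inner_smul_left]
    exact mul_le_mul_of_nonneg_left (real_inner_le_of_infDist_eq_dist hKtcv hy hxy hz)
      (inv_nonneg.2 hD.le)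
  have hux : ⟪u, x⟫ = ⟪u, y⟫ + infDist x Kt := by
    have : ⟪u, x - y⟫ = ‖x - y‖ := by
      rw [real_inner_smul_left, real_inner_self_eq_norm_sq]
      field_simp
    rw [hxy, dist_eq_norm, ← this, inner_sub_right]
    ring
  have hsupK : ⟪u, x⟫ ≤ sSup ((fun z => ⟪u, z⟫) '' K) :=
    le_csSup (hK.image hcont).bddAbove (mem_image_of_mem _ hx)
  have hinf : sInf ((fun z => ⟪u, z⟫) '' K) ≤ sInf ((fun z => ⟪u, z⟫) '' Kt) :=
    csInf_le_csInf (hK.image hcont).bddBelow (hKtne.image _) (image_mono hsub)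
  refine ⟨u, hu, ?_⟩
  unfold dirWidth
  linarith

theorem infDist_le_of_isEpsKernel {ε R : ℝ} (hε : 0 ≤ ε) (hker : IsEpsKernel ε Kt K)
    (hKt : IsCompact Kt) (hKtcv : Convex ℝ Kt) (hKtne : Kt.Nonempty) (hK : IsCompact K)
    (hKR : K ⊆ closedBall 0 R) {x : EuclideanSpace ℝ (Fin d)} (hx : x ∈ K) :
    infDist x Kt ≤ 2 * ε * R := by
  by_cases hxKt : x ∈ Kt
  · have hR : 0 ≤ R := dist_nonneg.trans (hKR hx)
    rw [infDist_zero_of_mem hxKt]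
    positivity
  obtain ⟨u, hu, hgap⟩ := exists_infDist_add_dirWidth_le hKt hKtcv hKtne hK hker.1 hx hxKt
  have hwidth := dirWidth_le_two_mul hu.le ⟨x, hx⟩ hKR
  calc infDist x Kt ≤ ε * dirWidth u K := by linarith [hker.2 u hu]
    _ ≤ ε * (2 * R) := mul_le_mul_of_nonneg_left hwidth hε
    _ = 2 * ε * R := by ring

end dirWidth

theorem hausdorffDist_le_of_epsKernel_general (d : ℕ) (R ε : ℝ) (hε : 0 < ε)
    (Kt K : Set (EuclideanSpace ℝ (Fin d)))
    (hsub : Kt ⊆ K)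
    (hKtne : Kt.Nonempty) (hKne : K.Nonempty)
    (hKtcp : IsCompact Kt) (hKcp : IsCompact K)
    (hKtcv : Convex ℝ Kt)
    (hKR : K ⊆ closedBall (0 : EuclideanSpace ℝ (Fin d)) R)
    (hker : IsEpsKernel ε Kt K) :
    hausdorffDist Kt K ≤ 2 * ε * R := by
  obtain ⟨x₀, hx₀⟩ := hKne
  have hR : 0 ≤ R := dist_nonneg.trans (hKR hx₀)
  refine hausdorffDist_le_of_infDist (by positivity) (fun x hx => ?_) fun x hx =>
    infDist_le_of_isEpsKernel hε.le hker hKtcp hKtcv hKtne hKcp hKR hx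
  rw [infDist_zero_of_mem (hsub hx)]
  positivity

/-- If `K ⊆ R·B_d` and `Kt` is an `ε`-kernel of `K`, then the Hausdorff distance between
`Kt` and `K` is at most `2εR`. -/
theorem hausdorffDist_le_of_epsKernel (d : ℕ) (R ε : ℝ) (hR : 1 ≤ R) (hε : 0 < ε)
    (Kt K : Set (EuclideanSpace ℝ (Fin d)))
    (hsub : Kt ⊆ K)
    (hKtne : Kt.Nonempty) (hKne : K.Nonempty)
    (hKtcp : IsCompact Kt) (hKcp : IsCompact K)
    (hKtcv : Convex ℝ Kt) (hKcv : Convex ℝ K)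
    (hKR : K ⊆ closedBall (0 : EuclideanSpace ℝ (Fin d)) R)
    (hker : IsEpsKernel ε Kt K) :
    hausdorffDist Kt K ≤ 2 * ε * R :=
  hausdorffDist_le_of_epsKernel_general d R ε hε Kt K hsub hKtne hKne hKtcp hKcp hKtcv hKR hker
end
end

section
/- Let d ≥ 2 be a fixed integer. There exists a constant C > 0 depending only on d such that the following holds for every R ≥ 1 with R = O(1), every ε ∈ (0,1), and every compact convex body K ⊆ ℝ^d with B_d ⊆ K ⊆ R·B_d. Set η = √(ε/R), let {x_1, …, x_n} be an η-net of the sphere (R+1)·S^{d-1} of radius R+1, and for each j let p_j ∈ K be a point with ‖p_j − π_K(x_j)‖ ≤ ε, where π_K(x_j) denotes the (unique) metric projection of x_j onto K. Then the convex hull of {p_1, …, p_n} is contained in K and is a Cε-kernel of K. -/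
/-!
Fix a unit direction `u` and a point `σ ∈ K` maximizing `⟪u, ·⟫`. The ray `σ + t • u` leaves
the ball of radius `R + 1` at some `t ≥ 1`, and the net supplies a point `x_j` within `η` of
that exit point. The metric projection `q` of `x_j` onto `K` is no farther from `x_j` than `σ`,
so `⟪u, x_j - q⟫ ≤ ‖x_j - q‖ ≤ ‖x_j - σ‖`; expanding both sides forces `⟪u, σ - q⟫ ≤ η² = ε/R`
as long as `η ≤ 1/2`. Hence `p_j` is within `ε/R + ε ≤ 2ε` of the supporting hyperplane of `K`
in every direction, so widths drop by at most `4ε`, while every width of `K` is at least `2`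
because `K` contains the unit ball. When `η > 1/2` we have `ε > 1/4`, and the kernel condition
with constant `4` holds trivially.
-/

open Metric Set
open scoped RealInnerProductSpace

noncomputable section

/-- `N` is a `δ`-net of `S`. -/
def IsNet {d : ℕ} (δ : ℝ) (N S : Set (EuclideanSpace ℝ (Fin d))) : Prop :=
  N ⊆ S ∧ (∀ v ∈ N, ∀ w ∈ N, v ≠ w → δ ≤ dist v w) ∧ ∀ v ∈ S, ∃ w ∈ N, dist v w ≤ δ

section InnerProductSpace

variable {E : Type*} [NormedAddCommGroup E] [InnerProductSpace ℝ E]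

lemma exists_norm_add_smul_eq {σ u : E} {ρ : ℝ} (hu : ‖u‖ = 1) (hσ : ‖σ‖ ≤ ρ) :
    ∃ t, ρ - ‖σ‖ ≤ t ∧ ‖σ + t • u‖ = ρ := by
  have hnorm_smul : ∀ t : ℝ, 0 ≤ t → ‖t • u‖ = t := fun t ht => by
    rw [norm_smul, hu, mul_one, Real.norm_of_nonneg ht]
  have hT : 0 ≤ ρ + ‖σ‖ := by linarith [norm_nonneg σ]
  have hρ : ρ ∈ Icc ‖σ + (0 : ℝ) • u‖ ‖σ + (ρ + ‖σ‖) • u‖ := by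
    refine ⟨by simpa using hσ, ?_⟩
    have := norm_sub_norm_le ((ρ + ‖σ‖) • u) (-σ)
    rw [hnorm_smul _ hT, norm_neg, sub_neg_eq_add, add_comm ((ρ + ‖σ‖) • u)] at this
    linarith
  obtain ⟨t, ⟨ht, -⟩, hρt⟩ :=
    intermediate_value_Icc hT (by fun_prop : Continuous fun t : ℝ => ‖σ + t • u‖).continuousOn hρ
  refine ⟨t, ?_, hρt⟩
  dsimp only at hρt
  have := norm_add_le σ (t • u)
  rw [hρt, hnorm_smul t ht] at this
  linarith

lemma inner_sub_le_sq_of_dist_le {σ u x q : E} {t η : ℝ} (hu : ‖u‖ = 1) (ht : 1 ≤ t)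
    (hη : η ≤ 1 / 2) (hx : dist x (σ + t • u) ≤ η) (hqσ : ⟪u, q⟫ ≤ ⟪u, σ⟫)
    (hxq : dist x q ≤ dist x σ) :
    ⟪u, σ⟫ - ⟪u, q⟫ ≤ η ^ 2 := by
  set v := x - (σ + t • u)
  set s := ⟪u, v⟫
  set a := ⟪u, σ⟫ - ⟪u, q⟫
  have hv : ‖v‖ ≤ η := by rwa [← dist_eq_norm]
  have hs : |s| ≤ η := (abs_real_inner_le_norm u v).trans (by rwa [hu, one_mul])
  have hxσ : ‖x - σ‖ ^ 2 = ‖v‖ ^ 2 + 2 * t * s + t ^ 2 := by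
    rw [show x - σ = v + t • u by simp only [v]; abel, norm_add_sq_real, real_inner_smul_right,
      real_inner_comm, norm_smul, hu, Real.norm_eq_abs, mul_one, sq_abs]
    ring
  have hxq_inner : s + t + a = ⟪u, x - q⟫ := by
    simp only [s, a, v, inner_sub_right, inner_add_right, real_inner_smul_right,
      real_inner_self_eq_norm_sq, hu]
    ring
  have hsq : (s + t + a) ^ 2 ≤ ‖v‖ ^ 2 + 2 * t * s + t ^ 2 := by
    rw [← hxσ]
    refine pow_le_pow_left₀ (by linarith [abs_le.1 hs]) ?_ 2
    calc s + t + a = ⟪u, x - q⟫ := hxq_inner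
      _ ≤ ‖x - q‖ := by simpa [hu] using real_inner_le_norm u (x - q)
      _ ≤ ‖x - σ‖ := by rwa [← dist_eq_norm, ← dist_eq_norm]
  -- Expanding `hsq` gives `s² + 2a(s + t) + a² ≤ ‖v‖²`, and `s + t ≥ 1 - η ≥ 1/2`.
  nlinarith [abs_le.1 hs, sq_nonneg s, sq_nonneg a, pow_le_pow_left₀ (norm_nonneg v) hv 2]

lemma exists_sSup_inner_le_inner_add {K : Set E} {R η ε : ℝ} {n : ℕ} {xs p : Fin n → E} {u : E}
    (hK : IsCompact K) (hKne : K.Nonempty) (hKR : K ⊆ closedBall 0 R)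
    (hcover : ∀ y ∈ sphere (0 : E) (R + 1), ∃ w ∈ range xs, dist y w ≤ η) (hη : η ≤ 1 / 2)
    (happrox : ∀ j, ∃ q ∈ K, (∀ z ∈ K, dist (xs j) q ≤ dist (xs j) z) ∧ dist (p j) q ≤ ε)
    (hu : ‖u‖ = 1) :
    ∃ j, sSup ((fun x => ⟪u, x⟫) '' K) ≤ ⟪u, p j⟫ + (η ^ 2 + ε) := by
  obtain ⟨σ, hσK, hσsup, hσmax⟩ :=
    hK.exists_sSup_image_eq_and_ge hKne (by fun_prop : Continuous fun x => ⟪u, x⟫).continuousOn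
  have hσR : ‖σ‖ ≤ R := mem_closedBall_zero_iff.1 (hKR hσK)
  obtain ⟨t, ht, hσt⟩ := exists_norm_add_smul_eq (σ := σ) (ρ := R + 1) hu (by linarith)
  obtain ⟨_, ⟨j, rfl⟩, hj⟩ := hcover (σ + t • u) (mem_sphere_zero_iff_norm.2 hσt)
  obtain ⟨q, hqK, hq_nearest, hpq⟩ := happrox j
  have hσq : ⟪u, σ⟫ - ⟪u, q⟫ ≤ η ^ 2 :=
    inner_sub_le_sq_of_dist_le (t := t) hu (by linarith) hη
      (by rwa [dist_comm]) (hσmax q hqK) (hq_nearest σ hσK)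
  have hqp : ⟪u, q⟫ - ⟪u, p j⟫ ≤ ε := by
    rw [← inner_sub_right]
    calc ⟪u, q - p j⟫ ≤ ‖q - p j‖ := by simpa [hu] using real_inner_le_norm u (q - p j)
      _ ≤ ε := by rwa [← dist_eq_norm, dist_comm]
  exact ⟨j, by linarith⟩

end InnerProductSpace

section dirWidth

open Bornology

variable {d : ℕ} {K Kt : Set (EuclideanSpace ℝ (Fin d))} {δ : ℝ}

lemma isBounded_image_inner (hK : IsBounded K) (u : EuclideanSpace ℝ (Fin d)) :
    IsBounded ((fun x => ⟪u, x⟫) '' K) :=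
  (innerSL ℝ u).lipschitz.isBounded_image hK

lemma sInf_image_inner_eq_neg_sSup (u : EuclideanSpace ℝ (Fin d))
    (K : Set (EuclideanSpace ℝ (Fin d))) :
    sInf ((fun x => ⟪u, x⟫) '' K) = -sSup ((fun x => ⟪-u, x⟫) '' K) := by
  rw [Real.sInf_def]
  congr 2
  ext a
  simp [inner_neg_left, neg_eq_iff_eq_neg]

lemma dirWidth_nonneg (hK : IsBounded K) (u : EuclideanSpace ℝ (Fin d)) : 0 ≤ dirWidth u K :=
  sub_nonneg.2 <| Real.sInf_le_sSup _ (isBounded_image_inner hK u).bddBelow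
    (isBounded_image_inner hK u).bddAbove

lemma two_le_dirWidth (hK : IsBounded K) (hBK : closedBall 0 1 ⊆ K)
    {u : EuclideanSpace ℝ (Fin d)} (hu : ‖u‖ = 1) : 2 ≤ dirWidth u K := by
  have huu : ⟪u, u⟫ = 1 := by rw [real_inner_self_eq_norm_sq, hu, one_pow]
  have hsup : 1 ≤ sSup ((fun x => ⟪u, x⟫) '' K) := huu ▸
    le_csSup (isBounded_image_inner hK u).bddAbove
      (mem_image_of_mem _ (hBK (mem_closedBall_zero_iff.2 hu.le)))
  have hinf : sInf ((fun x => ⟪u, x⟫) '' K) ≤ -1 := by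
    have := csInf_le (isBounded_image_inner hK u).bddBelow
      (mem_image_of_mem (fun x => ⟪u, x⟫) (hBK (mem_closedBall_zero_iff.2 (norm_neg u ▸ hu).le)))
    rwa [inner_neg_right, huu] at this
  unfold dirWidth
  linarith

lemma IsEpsKernel.mono {δ' : ℝ} (h : IsEpsKernel δ Kt K) (hδ : δ ≤ δ') (hK : IsBounded K) :
    IsEpsKernel δ' Kt K :=
  ⟨h.1, fun u hu => le_trans (by nlinarith [dirWidth_nonneg hK u]) (h.2 u hu)⟩

lemma isEpsKernel_of_one_le (hKt : Kt ⊆ K) (hK : IsBounded K) (hδ : 1 ≤ δ) :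
    IsEpsKernel δ Kt K :=
  ⟨hKt, fun u _ =>
    le_trans (by nlinarith [dirWidth_nonneg hK u]) (dirWidth_nonneg (hK.subset hKt) u)⟩

lemma isEpsKernel_of_forall_exists_sSup_le (hKt : Kt ⊆ K) (hK : IsBounded K)
    (hBK : closedBall 0 1 ⊆ K) (hδ : 0 ≤ δ)
    (h : ∀ u, ‖u‖ = 1 → ∃ y ∈ Kt, sSup ((fun x => ⟪u, x⟫) '' K) ≤ ⟪u, y⟫ + δ) :
    IsEpsKernel δ Kt K := by
  have hsup : ∀ u, ‖u‖ = 1 →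
      sSup ((fun x => ⟪u, x⟫) '' K) ≤ sSup ((fun x => ⟪u, x⟫) '' Kt) + δ := fun u hu => by
    obtain ⟨y, hy, hKy⟩ := h u hu
    linarith [le_csSup (isBounded_image_inner (hK.subset hKt) u).bddAbove (mem_image_of_mem _ hy)]
  refine ⟨hKt, fun u hu => ?_⟩
  have hgap : dirWidth u K ≤ dirWidth u Kt + 2 * δ := by
    have := hsup (-u) (by rwa [norm_neg])
    simp only [dirWidth, sInf_image_inner_eq_neg_sSup]
    linarith [hsup u hu]
  nlinarith [two_le_dirWidth hK hBK hu]

end dirWidth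

theorem epsKernel_construction_general (d : ℕ) (R₀ : ℝ) :
    ∃ C : ℝ, 0 < C ∧
      ∀ R : ℝ, 1 ≤ R → R ≤ R₀ →
        ∀ ε : ℝ, 0 < ε → ε < 1 →
          ∀ K : Set (EuclideanSpace ℝ (Fin d)), IsCompact K → Convex ℝ K →
            closedBall (0 : EuclideanSpace ℝ (Fin d)) 1 ⊆ K →
            K ⊆ closedBall (0 : EuclideanSpace ℝ (Fin d)) R →
            ∀ n : ℕ, ∀ xs : Fin n → EuclideanSpace ℝ (Fin d),
              IsNet (Real.sqrt (ε / R)) (Set.range xs)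
                (sphere (0 : EuclideanSpace ℝ (Fin d)) (R + 1)) →
              ∀ p : Fin n → EuclideanSpace ℝ (Fin d),
                (∀ j, p j ∈ K) →
                (∀ j, ∃ q ∈ K,
                  (∀ z ∈ K, dist (xs j) q ≤ dist (xs j) z) ∧ dist (p j) q ≤ ε) →
                convexHull ℝ (Set.range p) ⊆ K ∧
                  IsEpsKernel (C * ε) (convexHull ℝ (Set.range p)) K := by
  refine ⟨4, by norm_num, fun R hR _ ε hε _ K hK hKconv hBK hKR n xs hnet p hp happrox => ?_⟩
  have hhull : convexHull ℝ (range p) ⊆ K := convexHull_min (range_subset_iff.2 hp) hKconv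
  have hεR : ε / R ≤ ε := div_le_self hε.le hR
  refine ⟨hhull, ?_⟩
  by_cases hη : √(ε / R) ≤ 1 / 2
  · refine IsEpsKernel.mono (δ := ε / R + ε) ?_ (by linarith) hK.isBounded
    refine isEpsKernel_of_forall_exists_sSup_le hhull hK.isBounded hBK (by positivity)
      fun u hu => ?_
    obtain ⟨j, hj⟩ := exists_sSup_inner_le_inner_add hK ⟨0, hBK (mem_closedBall_self zero_le_one)⟩
      hKR hnet.2.2 hη happrox hu
    rw [Real.sq_sqrt (by positivity)] at hj
    exact ⟨p j, subset_convexHull ℝ _ (mem_range_self j), hj⟩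
  · have := (Real.lt_sqrt (by norm_num)).1 (not_le.1 hη)
    exact isEpsKernel_of_one_le hhull hK.isBounded (by linarith)

/-- Correctness of the ε-kernel construction: for fixed `d ≥ 2` and bounded `R` (`R = O(1)`,
formalized by quantifying over an arbitrary bound `R₀` on `R`), there is a constant `C > 0`
depending only on `d` (and the bound `R₀`) such that for any convex body `B_d ⊆ K ⊆ R·B_d`,
taking an `η`-net of the sphere of radius `R+1` with `η = √(ε/R)` and `ε`-approximate
metric projections `p_j ∈ K` of its points onto `K`, the convex hull of the `p_j` is
contained in `K` and is a `Cε`-kernel of `K`. -/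
theorem epsKernel_construction (d : ℕ) (hd : 2 ≤ d) (R₀ : ℝ) (hR₀ : 1 ≤ R₀) :
    ∃ C : ℝ, 0 < C ∧
      ∀ R : ℝ, 1 ≤ R → R ≤ R₀ →
        ∀ ε : ℝ, 0 < ε → ε < 1 →
          ∀ K : Set (EuclideanSpace ℝ (Fin d)), IsCompact K → Convex ℝ K →
            closedBall (0 : EuclideanSpace ℝ (Fin d)) 1 ⊆ K →
            K ⊆ closedBall (0 : EuclideanSpace ℝ (Fin d)) R →
            ∀ n : ℕ, ∀ xs : Fin n → EuclideanSpace ℝ (Fin d),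
              IsNet (Real.sqrt (ε / R)) (Set.range xs)
                (sphere (0 : EuclideanSpace ℝ (Fin d)) (R + 1)) →
              ∀ p : Fin n → EuclideanSpace ℝ (Fin d),
                (∀ j, p j ∈ K) →
                (∀ j, ∃ q ∈ K,
                  (∀ z ∈ K, dist (xs j) q ≤ dist (xs j) z) ∧ dist (p j) q ≤ ε) →
                convexHull ℝ (Set.range p) ⊆ K ∧
                  IsEpsKernel (C * ε) (convexHull ℝ (Set.range p)) K :=
  epsKernel_construction_general d R₀
end
end
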